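/- For R₃ = diag(-2i, 0, 2i) and the su(3) matrices X₁, Y₁, X₂, Y₂, the curve γ(t) = e^{π(5X₁ + √7 Y₁ + 5X₂ + √7 Y₂ + 3R₃)t} e^{-3πR₃ t} satisfies γ(0) = γ(1) = I, and the vector H = π(5X₁ + √7 Y₁ + 5X₂ + √7 Y₂) has norm ‖H‖ = 8π with respect to ⟨X,Y⟩ = -½ tr(XY). -/

import Mathlib

/-!
The matrix `A = 5X₁ + √7Y₁ + 5X₂ + √7Y₂ + 3R₃` is diagonalizable with eigenvalues `0, ±10i`,
so `exp (πA) = 1`; likewise `-3πR₃` is diagonal with entries in `2πiℤ`. For the norm,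
`tr (B²) = -128` for `B = 5X₁ + √7Y₁ + 5X₂ + √7Y₂`, so `‖πB‖² = 64π²`.
-/

open Matrix

noncomputable section

def T1 : Matrix (Fin 3) (Fin 3) ℂ :=
  !![-Complex.I, 0, 0; 0, Complex.I, 0; 0, 0, 0]
def T2 : Matrix (Fin 3) (Fin 3) ℂ :=
  !![-Complex.I / Real.sqrt 3, 0, 0; 0, -Complex.I / Real.sqrt 3, 0;
     0, 0, 2 * Complex.I / Real.sqrt 3]
def X1 : Matrix (Fin 3) (Fin 3) ℂ := !![0, 1, 0; -1, 0, 0; 0, 0, 0]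
def Y1 : Matrix (Fin 3) (Fin 3) ℂ := !![0, Complex.I, 0; Complex.I, 0, 0; 0, 0, 0]
def X2 : Matrix (Fin 3) (Fin 3) ℂ := !![0, 0, 0; 0, 0, 1; 0, -1, 0]
def Y2 : Matrix (Fin 3) (Fin 3) ℂ := !![0, 0, 0; 0, 0, -Complex.I; 0, -Complex.I, 0]
def X3 : Matrix (Fin 3) (Fin 3) ℂ := !![0, 0, 1; 0, 0, 0; -1, 0, 0]
def Y3 : Matrix (Fin 3) (Fin 3) ℂ := !![0, 0, Complex.I; 0, 0, 0; Complex.I, 0, 0]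
def R1 : Matrix (Fin 3) (Fin 3) ℂ := !![-2 * Complex.I, 0, 0; 0, 2 * Complex.I, 0; 0, 0, 0]
def R2 : Matrix (Fin 3) (Fin 3) ℂ := !![0, 0, 0; 0, 2 * Complex.I, 0; 0, 0, -2 * Complex.I]
def R3 : Matrix (Fin 3) (Fin 3) ℂ := !![-2 * Complex.I, 0, 0; 0, 0, 0; 0, 0, 2 * Complex.I]

namespace Matrix

variable {n 𝔸 : Type*} [Fintype n] [DecidableEq n]

theorem exp_diagonal_eq_one [NormedRing 𝔸] [NormedAlgebra ℚ 𝔸] [CompleteSpace 𝔸] {d : n → 𝔸}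
    (hd : ∀ i, NormedSpace.exp (d i) = 1) : NormedSpace.exp (diagonal d) = 1 := by
  rw [exp_diagonal, Pi.exp_def, funext hd, diagonal_one]

theorem exp_eq_one_of_mul_eq_mul_diagonal [NormedCommRing 𝔸] [NormedAlgebra ℚ 𝔸]
    [CompleteSpace 𝔸] {A P : Matrix n n 𝔸} {d : n → 𝔸} (hP : IsUnit P.det)
    (hAP : A * P = P * diagonal d) (hd : ∀ i, NormedSpace.exp (d i) = 1) :
    NormedSpace.exp A = 1 := by
  have hA : A = P * diagonal d * P⁻¹ := by
    rw [← hAP, Matrix.mul_assoc, mul_nonsing_inv _ hP, Matrix.mul_one]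
  rw [hA, exp_conj _ _ ((isUnit_iff_isUnit_det P).mpr hP), exp_diagonal_eq_one hd,
    Matrix.mul_one, mul_nonsing_inv _ hP]

end Matrix

theorem Complex.exp_eq_one_of_eq_int_mul {x : ℂ} (k : ℤ) (hx : x = k * (2 * Real.pi * I)) :
    NormedSpace.exp x = 1 := by
  rw [← Complex.exp_eq_exp_ℂ, hx, Complex.exp_int_mul_two_pi_mul_I]

def horiz : Matrix (Fin 3) (Fin 3) ℂ :=
  (5 : ℝ) • X1 + (Real.sqrt 7 : ℝ) • Y1 + (5 : ℝ) • X2 + (Real.sqrt 7 : ℝ) • Y2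

theorem sqrt_seven_mul_self : (Real.sqrt 7 : ℂ) * Real.sqrt 7 = 7 := by
  exact_mod_cast Real.mul_self_sqrt (by norm_num : (0 : ℝ) ≤ 7)

theorem trace_horiz_mul_self : (horiz * horiz).trace = -128 := by
  simp [horiz, X1, Y1, X2, Y2, trace, Fin.sum_univ_three, Complex.real_smul]
  ring_nf
  simp [pow_two, sqrt_seven_mul_self]
  norm_num

/-- Columns: eigenvectors of `horiz + 3 • R3` for the eigenvalues `0`, `10 i`, `-10 i`. -/
def horizEigenbasis : Matrix (Fin 3) (Fin 3) ℂ :=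
  let a : ℂ := 5 + Real.sqrt 7 * Complex.I
  !![a, a, 4 * a; 6 * Complex.I, 16 * Complex.I, -16 * Complex.I; a, -4 * a, -a]

theorem det_horizEigenbasis :
    horizEigenbasis.det = -250 * Complex.I * (5 + Real.sqrt 7 * Complex.I) ^ 2 := by
  simp [horizEigenbasis, det_fin_three]
  ring

theorem horiz_add_mul_horizEigenbasis :
    (horiz + (3 : ℝ) • R3) * horizEigenbasis =
      horizEigenbasis * diagonal ![0, 10 * Complex.I, -10 * Complex.I] := by
  ext i j
  fin_cases i <;> fin_cases j <;>
    simp [horiz, horizEigenbasis, X1, Y1, X2, Y2, R3, mul_apply, Fin.sum_univ_three,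
      Complex.real_smul] <;>
    ring_nf <;> simp [sqrt_seven_mul_self, pow_two] <;> ring_nf

theorem isUnit_det_horizEigenbasis : IsUnit horizEigenbasis.det := by
  have ha : (5 + Real.sqrt 7 * Complex.I : ℂ) ≠ 0 := fun h => by
    simpa using congrArg Complex.re h
  rw [isUnit_iff_ne_zero, det_horizEigenbasis]
  exact mul_ne_zero (mul_ne_zero (by norm_num) Complex.I_ne_zero) (pow_ne_zero 2 ha)

theorem exp_pi_smul_horiz_add : NormedSpace.exp (Real.pi • (horiz + (3 : ℝ) • R3)) = 1 := by
  refine exp_eq_one_of_mul_eq_mul_diagonal (d := Real.pi • ![0, 10 * Complex.I, -10 * Complex.I])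
    isUnit_det_horizEigenbasis ?_ ?_
  · rw [smul_mul_assoc, horiz_add_mul_horizEigenbasis, diagonal_smul, mul_smul_comm]
  · intro i
    fin_cases i
    · exact Complex.exp_eq_one_of_eq_int_mul 0 (by simp)
    · exact Complex.exp_eq_one_of_eq_int_mul 5 (by simp [Complex.real_smul]; ring)
    · exact Complex.exp_eq_one_of_eq_int_mul (-5) (by simp [Complex.real_smul]; ring)

theorem R3_eq_diagonal : R3 = diagonal ![-2 * Complex.I, 0, 2 * Complex.I] := by
  ext i j
  fin_cases i <;> fin_cases j <;> rfl

theorem exp_neg_three_pi_smul_R3 : NormedSpace.exp (-((3 * Real.pi) • R3)) = 1 := by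
  rw [R3_eq_diagonal, ← diagonal_smul, diagonal_neg]
  refine exp_diagonal_eq_one fun i => ?_
  fin_cases i
  · exact Complex.exp_eq_one_of_eq_int_mul 3 (by simp [Complex.real_smul]; ring)
  · exact Complex.exp_eq_one_of_eq_int_mul 0 (by simp)
  · exact Complex.exp_eq_one_of_eq_int_mul (-3) (by simp [Complex.real_smul]; ring)

/-- The curve `γ(t) = e^{π(5X₁+√7Y₁+5X₂+√7Y₂+3R₃)t} e^{-3πR₃t}` satisfies
`γ(0) = γ(1) = I`, and `H = π(5X₁+√7Y₁+5X₂+√7Y₂)` has norm `‖H‖ = 8π`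
for `⟨X,Y⟩ = -½ tr(XY)`. -/
theorem su3_loop_example :
    (NormedSpace.exp ((Real.pi * 0) •
          ((5 : ℝ) • X1 + (Real.sqrt 7 : ℝ) • Y1 + (5 : ℝ) • X2 +
            (Real.sqrt 7 : ℝ) • Y2 + (3 : ℝ) • R3)) *
        NormedSpace.exp (-((3 * Real.pi * 0) • R3)) = 1) ∧
    (NormedSpace.exp ((Real.pi * 1) •
          ((5 : ℝ) • X1 + (Real.sqrt 7 : ℝ) • Y1 + (5 : ℝ) • X2 +
            (Real.sqrt 7 : ℝ) • Y2 + (3 : ℝ) • R3)) *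
        NormedSpace.exp (-((3 * Real.pi * 1) • R3)) = 1) ∧
    Real.sqrt ((-(1/2 : ℂ) *
        (((Real.pi • ((5 : ℝ) • X1 + (Real.sqrt 7 : ℝ) • Y1 + (5 : ℝ) • X2 +
            (Real.sqrt 7 : ℝ) • Y2)) *
          (Real.pi • ((5 : ℝ) • X1 + (Real.sqrt 7 : ℝ) • Y1 + (5 : ℝ) • X2 +
            (Real.sqrt 7 : ℝ) • Y2))).trace)).re)
      = 8 * Real.pi := by
  refine ⟨by simp, ?_, ?_⟩
  · rw [mul_one, mul_one, ← horiz.eq_1, exp_pi_smul_horiz_add, exp_neg_three_pi_smul_R3,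
      one_mul]
  · rw [← horiz.eq_1]
    have hnorm : -(1/2 : ℂ) * ((Real.pi • horiz) * (Real.pi • horiz)).trace =
        ((8 * Real.pi) ^ 2 : ℝ) := by
      rw [smul_mul_smul_comm, trace_smul, trace_horiz_mul_self, Complex.real_smul]
      push_cast
      ring
    rw [hnorm, Complex.ofReal_re, Real.sqrt_sq (by positivity)]
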